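/- Let n ≥ 1 be an integer and let ζ = exp(πi/n) ∈ ℂ. Then −(1/2)·(1/(2n)) Σ_{j=1}^{2n−1} ζ^{(n−1)j}/(1−ζ^{−j})² + (1/8)·(1/(4n))·( Σ_{j=1}^{2n−1} (1+ζ^{−j})(1+ζ^{j})/((1−ζ^{−j})(1−ζ^{j})) + 2n ) = 0. -/

import Mathlib

/-!
For a primitive `N`-th root of unity `ζ` and `x = ζ ^ j ≠ 1`, the weighted geometric series gives
`(1 - x)⁻¹ = -N⁻¹ ∑_{k<N} k x^k`. Substituting this once, orthogonality
`∑_{j=1}^{N-1} ζ^{jm} = N [N ∣ m] - 1` yields `∑_j ζ^{jm} / (1 - ζ^j) = m - (N + 1) / 2` for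
`1 ≤ m ≤ N`; substituting it into `ζ^j / (1 - ζ^j)^2 = ζ^j / (1 - ζ^j) · (1 - ζ^j)⁻¹` yields the
classical `∑_j ζ^j / (1 - ζ^j)^2 = -(N^2 - 1) / 12`, and the difference in `m` then evaluates
`∑_j ζ^{jm} / (1 - ζ^j)^2` for all `1 ≤ m ≤ N`. For `N = 2n` the first sum of the theorem is the
case `m = n + 1`, and each term of the second is `-1 - 4 ζ^j / (1 - ζ^j)^2`.
-/

open Finset

section

variable {K : Type*} [Field K]

theorem sub_one_mul_sum_range_natCast_mul_pow (x : K) (N : ℕ) :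
    (x - 1) * ∑ k ∈ range N, (k : K) * x ^ k = (N - 1) * x ^ N - ∑ k ∈ range N, x ^ k + 1 := by
  induction N with
  | zero => simp
  | succ N ih =>
    rw [sum_range_succ, sum_range_succ]
    push_cast
    linear_combination ih

theorem inv_one_sub_eq_neg_inv_mul_sum_range {x : K} {N : ℕ} (hx : x ≠ 1) (hxN : x ^ N = 1)
    (hN : (N : K) ≠ 0) : (1 - x)⁻¹ = -(N : K)⁻¹ * ∑ k ∈ range N, (k : K) * x ^ k := by
  have h := sub_one_mul_sum_range_natCast_mul_pow x N
  rw [geom_sum_eq hx, hxN, sub_self, zero_div] at h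
  have hx' : 1 - x ≠ 0 := sub_ne_zero.mpr hx.symm
  field_simp
  linear_combination -h

theorem pow_div_one_sub_inv_sq {x : K} (hx : x ≠ 0) (k : ℕ) :
    x ^ k / (1 - x⁻¹) ^ 2 = x ^ (k + 2) / (1 - x) ^ 2 := by
  rw [show 1 - x⁻¹ = -(1 - x) / x by field_simp; ring, div_pow, neg_sq, pow_add]
  field_simp

theorem one_add_inv_mul_one_add_div_one_sub_inv_mul_one_sub {x : K}
    (hx₀ : x ≠ 0) (hx₁ : x ≠ 1) :
    (1 + x⁻¹) * (1 + x) / ((1 - x⁻¹) * (1 - x)) = -1 - 4 * x / (1 - x) ^ 2 := by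
  have : 1 - x ≠ 0 := sub_ne_zero.mpr hx₁.symm
  field_simp
  ring

variable [CharZero K]

theorem sum_range_natCast (N : ℕ) : ∑ k ∈ range N, (k : K) = N * (N - 1) / 2 := by
  induction N with
  | zero => simp
  | succ N ih => rw [sum_range_succ, ih]; push_cast; ring

theorem sum_range_natCast_mul_succ (N : ℕ) :
    ∑ k ∈ range N, (k : K) * (k + 1) = (N - 1) * N * (N + 1) / 3 := by
  induction N with
  | zero => simp
  | succ N ih => rw [sum_range_succ, ih]; push_cast; ring

end

theorem Nat.dvd_add_iff_eq_sub_of_lt {N m k : ℕ} (hm : 1 ≤ m) (hmN : m ≤ N) (hk : k < N) :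
    N ∣ m + k ↔ k = N - m := by
  refine ⟨fun h => ?_, fun h => by rw [h, Nat.add_sub_cancel' hmN]⟩
  have := Nat.eq_of_dvd_of_lt_two_mul (by omega) h (by omega)
  omega

namespace IsPrimitiveRoot

variable {K : Type*} [Field K] {ζ : K} {N : ℕ}

theorem pow_ne_one_of_mem_Icc (hζ : IsPrimitiveRoot ζ N) {j : ℕ} (hj : j ∈ Icc 1 (N - 1)) :
    ζ ^ j ≠ 1 := by
  rw [mem_Icc] at hj
  exact hζ.pow_ne_one_of_pos_of_lt (by omega) (by omega)

theorem sum_range_pow_pow (hζ : IsPrimitiveRoot ζ N) (m : ℕ) :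
    ∑ j ∈ range N, (ζ ^ j) ^ m = if N ∣ m then (N : K) else 0 := by
  simp_rw [← pow_mul, mul_comm, pow_mul]
  split_ifs with h
  · simp [(hζ.pow_eq_one_iff_dvd m).mpr h]
  · rw [geom_sum_eq (mt (hζ.pow_eq_one_iff_dvd m).mp h), pow_right_comm, hζ.pow_eq_one, one_pow,
      sub_self, zero_div]

theorem sum_Icc_pow_pow (hζ : IsPrimitiveRoot ζ N) (hN : 0 < N) (m : ℕ) :
    ∑ j ∈ Icc 1 (N - 1), (ζ ^ j) ^ m = (if N ∣ m then (N : K) else 0) - 1 := by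
  rw [← hζ.sum_range_pow_pow, sum_range_eq_add_Ico _ hN,
    Icc_sub_one_right_eq_Ico_of_not_isMin (by simpa using hN.ne')]
  simp

variable [CharZero K]

theorem sum_Icc_mul_inv_one_sub (hζ : IsPrimitiveRoot ζ N) (hN : 0 < N) (g : ℕ → K) :
    ∑ j ∈ Icc 1 (N - 1), g j * (1 - ζ ^ j)⁻¹
      = -(N : K)⁻¹ * ∑ k ∈ range N, (k : K) * ∑ j ∈ Icc 1 (N - 1), g j * (ζ ^ j) ^ k := by
  have hexpand : ∀ j ∈ Icc 1 (N - 1),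
      (1 - ζ ^ j)⁻¹ = -(N : K)⁻¹ * ∑ k ∈ range N, (k : K) * (ζ ^ j) ^ k := fun j hj =>
    inv_one_sub_eq_neg_inv_mul_sum_range (hζ.pow_ne_one_of_mem_Icc hj)
      (by rw [pow_right_comm, hζ.pow_eq_one, one_pow]) (Nat.cast_ne_zero.mpr hN.ne')
  rw [sum_congr rfl fun j hj => by rw [hexpand j hj]]
  simp_rw [mul_sum]
  rw [sum_comm]
  refine sum_congr rfl fun j _ => sum_congr rfl fun k _ => ?_
  ring

theorem sum_Icc_pow_div_one_sub (hζ : IsPrimitiveRoot ζ N) {m : ℕ} (hm : 1 ≤ m) (hmN : m ≤ N) :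
    ∑ j ∈ Icc 1 (N - 1), (ζ ^ j) ^ m / (1 - ζ ^ j) = m - (N + 1) / 2 := by
  have hN : (N : K) ≠ 0 := Nat.cast_ne_zero.mpr (by omega)
  simp_rw [div_eq_mul_inv, hζ.sum_Icc_mul_inv_one_sub (by omega), ← pow_add,
    hζ.sum_Icc_pow_pow (by omega),
    mul_sub, mul_one, sum_sub_distrib, mul_ite, mul_zero]
  rw [sum_congr rfl fun k hk => if_congr (Nat.dvd_add_iff_eq_sub_of_lt hm hmN (mem_range.mp hk))
    rfl rfl, sum_ite_eq', if_pos (mem_range.mpr (by omega)), sum_range_natCast, Nat.cast_sub hmN]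
  field_simp
  ring

theorem sum_Icc_div_one_sub_sq (hζ : IsPrimitiveRoot ζ N) (hN : 0 < N) :
    ∑ j ∈ Icc 1 (N - 1), ζ ^ j / (1 - ζ ^ j) ^ 2 = -((N : K) ^ 2 - 1) / 12 := by
  have hN' : (N : K) ≠ 0 := Nat.cast_ne_zero.mpr hN.ne'
  have hsplit : ∀ j, ζ ^ j / (1 - ζ ^ j) ^ 2 = ζ ^ j / (1 - ζ ^ j) * (1 - ζ ^ j)⁻¹ := fun j => by
    rw [sq, div_mul_eq_div_div, div_eq_mul_inv]
  simp_rw [hsplit, hζ.sum_Icc_mul_inv_one_sub hN, div_mul_eq_mul_div, ← pow_succ']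
  rw [sum_congr rfl fun k hk =>
    by rw [hζ.sum_Icc_pow_div_one_sub (by omega) (by have := mem_range.mp hk; omega)]]
  simp_rw [mul_sub, sum_sub_distrib, ← sum_mul]
  push_cast
  rw [sum_range_natCast, sum_range_natCast_mul_succ]
  field_simp
  ring

theorem sum_Icc_pow_div_one_sub_sq (hζ : IsPrimitiveRoot ζ N) {m : ℕ} (hm : 1 ≤ m)
    (hmN : m ≤ N) :
    ∑ j ∈ Icc 1 (N - 1), (ζ ^ j) ^ m / (1 - ζ ^ j) ^ 2
      = ((m : K) - 1) * ((N : K) + 1 - m) / 2 - ((N : K) ^ 2 - 1) / 12 := by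
  induction m, hm using Nat.le_induction with
  | base =>
    simp_rw [pow_one, hζ.sum_Icc_div_one_sub_sq (by omega)]
    ring
  | succ m hm ih =>
    have hstep : ∀ j ∈ Icc 1 (N - 1), (ζ ^ j) ^ (m + 1) / (1 - ζ ^ j) ^ 2
        = (ζ ^ j) ^ m / (1 - ζ ^ j) ^ 2 - (ζ ^ j) ^ m / (1 - ζ ^ j) := fun j hj => by
      have := sub_ne_zero.mpr (hζ.pow_ne_one_of_mem_Icc hj).symm
      field_simp
      ring
    rw [sum_congr rfl hstep, sum_sub_distrib, ih (by omega),
      hζ.sum_Icc_pow_div_one_sub hm (by omega)]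
    push_cast
    ring

theorem sum_Icc_pow_div_one_sub_inv_sq (hζ : IsPrimitiveRoot ζ N) {m : ℕ} (hmN : m + 2 ≤ N) :
    ∑ j ∈ Icc 1 (N - 1), (ζ ^ j) ^ m / (1 - (ζ ^ j)⁻¹) ^ 2
      = ((m : K) + 1) * ((N : K) - 1 - m) / 2 - ((N : K) ^ 2 - 1) / 12 := by
  simp_rw [pow_div_one_sub_inv_sq (pow_ne_zero _ (hζ.ne_zero (by omega)))]
  rw [hζ.sum_Icc_pow_div_one_sub_sq (by omega) hmN]
  push_cast
  ring

theorem sum_Icc_one_add_inv_mul_one_add_div_one_sub_inv_mul_one_sub (hζ : IsPrimitiveRoot ζ N)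
    (hN : 0 < N) :
    ∑ j ∈ Icc 1 (N - 1), (1 + (ζ ^ j)⁻¹) * (1 + ζ ^ j) / ((1 - (ζ ^ j)⁻¹) * (1 - ζ ^ j))
      = ((N : K) - 1) * ((N : K) - 2) / 3 := by
  rw [sum_congr rfl fun j hj => one_add_inv_mul_one_add_div_one_sub_inv_mul_one_sub
    (pow_ne_zero _ (hζ.ne_zero hN.ne')) (hζ.pow_ne_one_of_mem_Icc hj)]
  simp_rw [sum_sub_distrib, mul_div_assoc, ← mul_sum]
  rw [hζ.sum_Icc_div_one_sub_sq hN, sum_const, Nat.card_Icc, Nat.add_sub_cancel,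
    nsmul_eq_mul, Nat.cast_sub hN]
  push_cast
  ring

end IsPrimitiveRoot

/-- For `n ≥ 1` and `ζ = exp(πi/n)`:
`-(1/2)(1/(2n)) ∑_{j=1}^{2n-1} ζ^{(n-1)j}/(1-ζ^{-j})²
  + (1/8)(1/(4n))(∑_{j=1}^{2n-1} (1+ζ^{-j})(1+ζ^{j})/((1-ζ^{-j})(1-ζ^{j})) + 2n) = 0`,
i.e. `δ(Y(n), s_{u,1}) = 0`. -/
theorem delta_prism_v1 (n : ℕ) (hn : 1 ≤ n) (ζ : ℂ)
    (hζ : ζ = Complex.exp (Real.pi * Complex.I / n)) :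
    -(1 / 2) * ((1 / (2 * (n : ℂ))) *
        (∑ j ∈ Finset.Icc 1 (2 * n - 1), ζ ^ ((n - 1) * j) / (1 - ζ ^ (-(j : ℤ))) ^ 2)) +
      (1 / 8) * (1 / (4 * (n : ℂ))) *
        ((∑ j ∈ Finset.Icc 1 (2 * n - 1),
          (1 + ζ ^ (-(j : ℤ))) * (1 + ζ ^ (j : ℤ)) /
            ((1 - ζ ^ (-(j : ℤ))) * (1 - ζ ^ (j : ℤ)))) + 2 * (n : ℂ)) = 0 := by
  have hprim : IsPrimitiveRoot ζ (2 * n) := by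
    convert Complex.isPrimitiveRoot_exp (2 * n) (by omega) using 2
    rw [hζ]
    push_cast
    field_simp
  simp_rw [zpow_neg, zpow_natCast, pow_mul']
  rw [hprim.sum_Icc_pow_div_one_sub_inv_sq (by omega),
    hprim.sum_Icc_one_add_inv_mul_one_add_div_one_sub_inv_mul_one_sub (by omega)]
  push_cast [Nat.cast_sub hn]
  field_simp
  ring
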